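/- arXiv:2303.09538 — 2 statements merged into one kernel-verified Lean document; each statement's English description precedes it below -/
import Mathlib

section
/- Let A and B be Hermitian n×n complex matrices with A² = I, B² = I, and AB + BA = 0. Then for all real α, β, γ there exist real a, b, c such that exp(iαA)·exp(iβB)·exp(iγA) = exp(iaB)·exp(ibA)·exp(icB). -/
/-!
The matrices `iA` and `iB` are anticommuting square roots of `-1`, so `i ↦ iA`, `j ↦ iB` extends
to a real algebra map from the quaternions sending `cos t + (sin t) i` to `exp (itA)` and
`cos t + (sin t) j` to `exp (itB)`. The claim therefore becomes the Euler-angle decomposition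
of unit quaternions: every unit quaternion is
`(cos a + (sin a) j)(cos b + (sin b) i)(cos c + (sin c) j)`, and the left-hand side is a product
of unit quaternions.
-/

open NormedSpace Quaternion

namespace Quaternion

noncomputable def cisI (t : ℝ) : ℍ[ℝ] := ⟨Real.cos t, Real.sin t, 0, 0⟩

noncomputable def cisJ (t : ℝ) : ℍ[ℝ] := ⟨Real.cos t, 0, Real.sin t, 0⟩

theorem normSq_cisI (t : ℝ) : normSq (cisI t) = 1 := by
  simp only [normSq_def']
  simp [cisI]

theorem normSq_cisJ (t : ℝ) : normSq (cisJ t) = 1 := by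
  simp only [normSq_def']
  simp [cisJ]

theorem cisJ_mul_cisI_mul_cisJ (a b c : ℝ) :
    cisJ a * cisI b * cisJ c =
      ⟨Real.cos b * Real.cos (a + c), Real.sin b * Real.cos (a - c),
        Real.cos b * Real.sin (a + c), -(Real.sin b * Real.sin (a - c))⟩ := by
  ext <;> simp only [re_mul, imI_mul, imJ_mul, imK_mul] <;>
    simp only [cisI, cisJ, Real.cos_add, Real.cos_sub, Real.sin_add, Real.sin_sub] <;> ring

theorem exists_eq_cisJ_mul_cisI_mul_cisJ {q : ℍ[ℝ]} (hq : normSq q = 1) :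
    ∃ a b c : ℝ, q = cisJ a * cisI b * cisJ c := by
  -- By `cisJ_mul_cisI_mul_cisJ` we need `u = cos b · e^{i(a+c)}` and `v = sin b · e^{i(a-c)}`:
  -- take the polar forms of `u` and `v`, and `b` the angle of `(‖u‖, ‖v‖)`, a unit vector.
  set u : ℂ := ⟨q.re, q.imJ⟩
  set v : ℂ := ⟨q.imI, -q.imK⟩
  set w : ℂ := ⟨‖u‖, ‖v‖⟩
  have hw : ‖w‖ = 1 := by
    refine (pow_eq_one_iff_of_nonneg (norm_nonneg w) two_ne_zero).mp ?_
    rw [normSq_def'] at hq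
    simp only [w, Complex.sq_norm, Complex.normSq_mk, ← sq, u, v]
    linear_combination hq
  refine ⟨(u.arg + v.arg) / 2, w.arg, (u.arg - v.arg) / 2, ?_⟩
  have hcos : Real.cos w.arg = ‖u‖ := by simpa [hw] using Complex.norm_mul_cos_arg w
  have hsin : Real.sin w.arg = ‖v‖ := by simpa [hw] using Complex.norm_mul_sin_arg w
  have hadd : (u.arg + v.arg) / 2 + (u.arg - v.arg) / 2 = u.arg := by ring
  have hsub : (u.arg + v.arg) / 2 - (u.arg - v.arg) / 2 = v.arg := by ring
  rw [cisJ_mul_cisI_mul_cisJ, hcos, hsin]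
  ext <;> simp [hadd, hsub, u, v]

end Quaternion

section

variable {𝔸 : Type*} [Ring 𝔸] [Algebra ℝ 𝔸]

def QuaternionAlgebra.Basis.ofAnticommute {x y : 𝔸} (hx : x * x = -1) (hy : y * y = -1)
    (hyx : y * x = -(x * y)) : QuaternionAlgebra.Basis 𝔸 (-1 : ℝ) 0 (-1) where
  i := x
  j := y
  k := x * y
  i_mul_i := by simp [hx]
  j_mul_j := by simp [hy]
  i_mul_j := rfl
  j_mul_i := by simp [hyx]

variable [TopologicalSpace 𝔸] [IsTopologicalRing 𝔸] [T2Space 𝔸] [ContinuousSMul ℝ 𝔸]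

theorem exp_smul_of_mul_self_eq_neg_one {x : 𝔸} (hx : x * x = -1) (t : ℝ) :
    exp (t • x) = algebraMap ℝ 𝔸 (Real.cos t) + Real.sin t • x := by
  rw [exp_eq_tsum ℝ, Algebra.algebraMap_eq_smul_one]
  refine HasSum.tsum_eq ?_
  have hpow (k : ℕ) : x ^ (2 * k) = (-1 : ℝ) ^ k • 1 := by
    rw [pow_mul, sq, hx, ← Algebra.algebraMap_eq_smul_one, map_pow, map_neg, map_one]
  refine HasSum.even_add_odd ?_ ?_
  · convert (Real.hasSum_cos t).smul_const (1 : 𝔸) using 2 with k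
    rw [smul_pow, hpow, smul_smul, smul_smul]
    congr 1
    ring
  · convert (Real.hasSum_sin t).smul_const x using 2 with k
    rw [smul_pow, pow_succ x, hpow, smul_mul_assoc, one_mul, smul_smul, smul_smul]
    congr 1
    ring

namespace QuaternionAlgebra.Basis

theorem exp_smul_i (q : Basis 𝔸 (-1 : ℝ) 0 (-1)) (t : ℝ) :
    exp (t • q.i) = q.liftHom (cisI t) := by
  rw [exp_smul_of_mul_self_eq_neg_one (by simp [q.i_mul_i])]
  simp [lift, cisI]

theorem exp_smul_j (q : Basis 𝔸 (-1 : ℝ) 0 (-1)) (t : ℝ) :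
    exp (t • q.j) = q.liftHom (cisJ t) := by
  rw [exp_smul_of_mul_self_eq_neg_one (by simp [q.j_mul_j])]
  simp [lift, cisJ]

end QuaternionAlgebra.Basis

end

theorem turnover_of_anticommuting_involutions_general {n : ℕ}
    (A B : Matrix (Fin n) (Fin n) ℂ)
    (hA : A * A = 1) (hB : B * B = 1) (hAB : A * B + B * A = 0)
    (α β γ : ℝ) :
    ∃ a b c : ℝ,
      NormedSpace.exp ((Complex.I * α) • A) *
          NormedSpace.exp ((Complex.I * β) • B) *
            NormedSpace.exp ((Complex.I * γ) • A) =
        NormedSpace.exp ((Complex.I * a) • B) *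
            NormedSpace.exp ((Complex.I * b) • A) *
              NormedSpace.exp ((Complex.I * c) • B) := by
  have hsq {X : Matrix (Fin n) (Fin n) ℂ} (hX : X * X = 1) :
      (Complex.I • X) * (Complex.I • X) = -1 := by
    simp [smul_smul, hX]
  have hanti :
      (Complex.I • B) * (Complex.I • A) = -((Complex.I • A) * (Complex.I • B)) := by
    simp [smul_smul, eq_neg_of_add_eq_zero_left hAB]
  let q := QuaternionAlgebra.Basis.ofAnticommute (hsq hA) (hsq hB) hanti
  -- `ℍ[ℝ]` is a type synonym for `ℍ[ℝ,-1,0,-1]`; retyping lets `map_mul` see the product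
  -- of `ℍ[ℝ]`.
  let φ : ℍ[ℝ] →ₐ[ℝ] Matrix (Fin n) (Fin n) ℂ := q.liftHom
  have hsmul (X : Matrix (Fin n) (Fin n) ℂ) (t : ℝ) :
      (Complex.I * t) • X = t • (Complex.I • X) := by
    rw [mul_comm, ← smul_smul, Complex.coe_smul]
  have hexpA (t : ℝ) : exp ((Complex.I * t) • A) = φ (cisI t) := by
    rw [hsmul]
    exact q.exp_smul_i t
  have hexpB (t : ℝ) : exp ((Complex.I * t) • B) = φ (cisJ t) := by
    rw [hsmul]
    exact q.exp_smul_j t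
  obtain ⟨a, b, c, h⟩ := exists_eq_cisJ_mul_cisI_mul_cisJ
    (q := cisI α * cisJ β * cisI γ) (by simp [normSq_cisI, normSq_cisJ])
  exact ⟨a, b, c, by simpa only [hexpA, hexpB, map_mul] using congrArg φ h⟩

theorem turnover_of_anticommuting_involutions {n : ℕ}
    (A B : Matrix (Fin n) (Fin n) ℂ)
    (hAh : A.IsHermitian) (hBh : B.IsHermitian)
    (hA : A * A = 1) (hB : B * B = 1) (hAB : A * B + B * A = 0)
    (α β γ : ℝ) :
    ∃ a b c : ℝ,
      NormedSpace.exp ((Complex.I * α) • A) *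
          NormedSpace.exp ((Complex.I * β) • B) *
            NormedSpace.exp ((Complex.I * γ) • A) =
        NormedSpace.exp ((Complex.I * a) • B) *
            NormedSpace.exp ((Complex.I * b) • A) *
              NormedSpace.exp ((Complex.I * c) • B) :=
  turnover_of_anticommuting_involutions_general A B hA hB hAB α β γ
end

section
/- The 8×8 matrices A := Z⊗Z⊗I and B := I⊗X⊗X are Hermitian involutions (A² = B² = I₈) that anticommute: AB + BA = 0. Consequently, for all real α, β, γ there exist real a, b, c with exp(iαA)·exp(iβB)·exp(iγA) = exp(iaB)·exp(ibA)·exp(icB). -/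
open Matrix Kronecker

noncomputable section

def PX : Matrix (Fin 2) (Fin 2) ℂ := !![0, 1; 1, 0]
def PY : Matrix (Fin 2) (Fin 2) ℂ := !![0, -Complex.I; Complex.I, 0]
def PZ : Matrix (Fin 2) (Fin 2) ℂ := !![1, 0; 0, -1]

/-- Kronecker product of two 2×2 matrices, reindexed as a 4×4 matrix
(first factor most significant). -/
def kron4 (A B : Matrix (Fin 2) (Fin 2) ℂ) : Matrix (Fin 4) (Fin 4) ℂ :=
  Matrix.reindex finProdFinEquiv finProdFinEquiv (A ⊗ₖ B)

/-- Kronecker product of three 2×2 matrices, reindexed as an 8×8 matrix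
(first factor most significant). -/
def kron8 (A B C : Matrix (Fin 2) (Fin 2) ℂ) : Matrix (Fin 8) (Fin 8) ℂ :=
  Matrix.reindex finProdFinEquiv finProdFinEquiv (A ⊗ₖ kron4 B C)

/-!
Because `A * A = 1`, `exp (i t A) = cos t + i sin t • A`, and because `A` and `B` anticommute,
both triple products expand in the basis `1, A, B, A * B` with real multiples of `1, i, i, 1` as
coefficients. For the left-hand side these four reals form a unit vector of `ℝ⁴`; writing it in
Hopf coordinates `(cos b cos p, cos b sin p, sin b cos q, sin b sin q)` yields the right-hand
angles `a = (p - q) / 2`, `c = (p + q) / 2`.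
-/

open Complex in
theorem exists_hopf_coordinates {w x y z : ℝ} (h : w ^ 2 + x ^ 2 + y ^ 2 + z ^ 2 = 1) :
    ∃ b p q : ℝ, Real.cos b * Real.cos p = w ∧ Real.cos b * Real.sin p = x ∧
      Real.sin b * Real.cos q = y ∧ Real.sin b * Real.sin q = z := by
  set u : ℂ := ⟨w, x⟩
  set v : ℂ := ⟨y, z⟩
  have huv : ‖u‖ ^ 2 + ‖v‖ ^ 2 = 1 := by
    simp only [Complex.sq_norm, normSq_mk, u, v]; linarith
  have hcos : Real.cos (Real.arccos ‖u‖) = ‖u‖ :=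
    Real.cos_arccos (by linarith [norm_nonneg u]) (by nlinarith [norm_nonneg u, norm_nonneg v])
  have hsin : Real.sin (Real.arccos ‖u‖) = ‖v‖ := by
    rw [Real.sin_arccos, ← huv, add_sub_cancel_left, Real.sqrt_sq (norm_nonneg v)]
  exact ⟨Real.arccos ‖u‖, arg u, arg v,
    by simp only [hcos, hsin, norm_mul_cos_arg, norm_mul_sin_arg, u, v, and_self]⟩

section Involution

variable {𝔸 : Type*} [Ring 𝔸] [Algebra ℂ 𝔸] [TopologicalSpace 𝔸] [IsTopologicalRing 𝔸]
  [T2Space 𝔸] [ContinuousSMul ℂ 𝔸]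

theorem exp_I_mul_smul_of_mul_self_eq_one {a : 𝔸} (ha : a * a = 1) (t : ℝ) :
    NormedSpace.exp ((Complex.I * t) • a) =
      (Real.cos t : ℂ) • 1 + (Complex.I * Real.sin t) • a := by
  rw [NormedSpace.exp_eq_tsum ℂ]
  refine HasSum.tsum_eq ?_
  have hc := ((Complex.hasSum_cos (t : ℂ)).smul_const (1 : 𝔸))
  have hs := (((Complex.hasSum_sin (t : ℂ)).mul_left Complex.I).smul_const a)
  rw [← Complex.ofReal_cos] at hc
  rw [← Complex.ofReal_sin] at hs
  have heven (k : ℕ) : a ^ (2 * k) = 1 := by rw [pow_mul, sq, ha, one_pow]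
  refine HasSum.even_add_odd ?_ ?_
  · convert hc using 2 with k
    rw [smul_pow, heven, smul_smul, mul_pow, pow_mul Complex.I, Complex.I_sq]
    ring_nf
  · convert hs using 2 with k
    rw [smul_pow, pow_succ a, heven, one_mul, smul_smul, mul_pow, pow_succ Complex.I,
      pow_mul Complex.I, Complex.I_sq]
    ring_nf

theorem exp_mul_exp_mul_exp_of_anticommute {a b : 𝔸} (ha : a * a = 1) (hb : b * b = 1)
    (hab : a * b + b * a = 0) (α β γ : ℝ) :
    NormedSpace.exp ((Complex.I * α) • a) * NormedSpace.exp ((Complex.I * β) • b) *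
        NormedSpace.exp ((Complex.I * γ) • a) =
      ((Real.cos β * Real.cos (α + γ) : ℝ) : ℂ) • 1
        + (Complex.I * (Real.cos β * Real.sin (α + γ) : ℝ)) • a
        + (Complex.I * (Real.sin β * Real.cos (γ - α) : ℝ)) • b
        + ((Real.sin β * Real.sin (γ - α) : ℝ) : ℂ) • (a * b) := by
  have hba : b * a = -(a * b) := eq_neg_of_add_eq_zero_right hab
  have haba : a * b * a = -b := by rw [mul_assoc, hba, mul_neg, ← mul_assoc, ha, one_mul]
  simp only [exp_I_mul_smul_of_mul_self_eq_one ha, exp_I_mul_smul_of_mul_self_eq_one hb,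
    mul_add, add_mul, smul_mul_smul, mul_one, one_mul, ha, hba, haba]
  push_cast [Complex.cos_add, Complex.sin_add, Complex.cos_sub, Complex.sin_sub]
  match_scalars <;> grind [Complex.I_sq]

end Involution

theorem kron4_mul (A B C D : Matrix (Fin 2) (Fin 2) ℂ) :
    kron4 A B * kron4 C D = kron4 (A * C) (B * D) := by
  simp only [kron4, reindex_apply, submatrix_mul_equiv, mul_kronecker_mul]

theorem kron8_mul (A B C D E F : Matrix (Fin 2) (Fin 2) ℂ) :
    kron8 A B C * kron8 D E F = kron8 (A * D) (B * E) (C * F) := by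
  simp only [kron8, reindex_apply, submatrix_mul_equiv, ← mul_kronecker_mul, kron4_mul]

theorem kron8_one : kron8 1 1 1 = 1 := by
  simp only [kron8, kron4, one_kronecker_one, reindex_apply, submatrix_one_equiv]

theorem kron8_neg_middle (A B C : Matrix (Fin 2) (Fin 2) ℂ) :
    kron8 A (-B) C = -kron8 A B C := by
  ext i j
  simp [kron8, kron4]

theorem isHermitian_kron8 {A B C : Matrix (Fin 2) (Fin 2) ℂ} (hA : A.IsHermitian)
    (hB : B.IsHermitian) (hC : C.IsHermitian) : (kron8 A B C).IsHermitian := by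
  rw [IsHermitian, kron8, kron4, conjTranspose_reindex, conjTranspose_kronecker,
    conjTranspose_reindex, conjTranspose_kronecker, hA.eq, hB.eq, hC.eq]

theorem PX_mul_PX : PX * PX = 1 := by
  simp [PX, one_fin_two]

theorem PZ_mul_PZ : PZ * PZ = 1 := by
  simp [PZ, one_fin_two]

theorem PX_mul_PZ : PX * PZ = -(PZ * PX) := by
  simp [PX, PZ]

theorem isHermitian_PX : PX.IsHermitian := by
  ext i j
  fin_cases i <;> fin_cases j <;> simp [PX]

theorem isHermitian_PZ : PZ.IsHermitian := by
  ext i j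
  fin_cases i <;> fin_cases j <;> simp [PZ]

theorem mixed_turnover_ZZI_IXX :
    letI A : Matrix (Fin 8) (Fin 8) ℂ := kron8 PZ PZ 1
    letI B : Matrix (Fin 8) (Fin 8) ℂ := kron8 1 PX PX
    A.IsHermitian ∧ B.IsHermitian ∧ A * A = 1 ∧ B * B = 1 ∧ A * B + B * A = 0 ∧
      ∀ α β γ : ℝ, ∃ a b c : ℝ,
        NormedSpace.exp ((Complex.I * α) • A) *
            NormedSpace.exp ((Complex.I * β) • B) *
              NormedSpace.exp ((Complex.I * γ) • A) =
          NormedSpace.exp ((Complex.I * a) • B) *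
              NormedSpace.exp ((Complex.I * b) • A) *
                NormedSpace.exp ((Complex.I * c) • B) := by
  have hA : kron8 PZ PZ 1 * kron8 PZ PZ 1 = 1 := by rw [kron8_mul, PZ_mul_PZ, one_mul, kron8_one]
  have hB : kron8 1 PX PX * kron8 1 PX PX = 1 := by rw [kron8_mul, PX_mul_PX, one_mul, kron8_one]
  have hAB : kron8 PZ PZ 1 * kron8 1 PX PX + kron8 1 PX PX * kron8 PZ PZ 1 = 0 := by
    rw [kron8_mul, kron8_mul, PX_mul_PZ, kron8_neg_middle, mul_one, one_mul, one_mul, mul_one,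
      add_neg_cancel]
  refine ⟨isHermitian_kron8 isHermitian_PZ isHermitian_PZ isHermitian_one,
    isHermitian_kron8 isHermitian_one isHermitian_PX isHermitian_PX, hA, hB, hAB, fun α β γ ↦ ?_⟩
  obtain ⟨b, p, q, hw, hx, hy, hz⟩ := exists_hopf_coordinates
    (w := Real.cos β * Real.cos (α + γ)) (x := Real.sin β * Real.cos (γ - α))
    (y := Real.cos β * Real.sin (α + γ)) (z := -(Real.sin β * Real.sin (γ - α))) (by
      nlinarith [Real.sin_sq_add_cos_sq β, Real.sin_sq_add_cos_sq (α + γ),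
        Real.sin_sq_add_cos_sq (γ - α)])
  refine ⟨(p - q) / 2, b, (p + q) / 2, ?_⟩
  rw [exp_mul_exp_mul_exp_of_anticommute hA hB hAB,
    exp_mul_exp_mul_exp_of_anticommute hB hA (by rwa [add_comm]),
    show (p - q) / 2 + (p + q) / 2 = p by ring, show (p + q) / 2 - (p - q) / 2 = q by ring,
    hw, hx, hy, hz, eq_neg_of_add_eq_zero_right hAB]
  push_cast
  module
end
end
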